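/- arXiv:1307.3574 — 13 statements merged into one kernel-verified Lean document; each statement's English description precedes it below -/
import Mathlib

section
/- Let K be a field, V a vector space over K with dim V ≠ 1, and f : V → V a group homomorphism (additive map) such that f(x) ∈ K·x for all x ∈ V. Then there exists λ ∈ K such that f(x) = λ·x for all x ∈ V. -/
/-!
If `f x = a • x` and `f y = b • y` with `x, y` linearly independent, then writing
`f (x + y) = d • (x + y)` and comparing coefficients gives `a = d = b`. So any two nonzero vectors
carry the same scalar once they are independent; two dependent ones are compared through a third
vector outside their common line, which exists because `V` is not a line.
-/

open Submodule

section

variable {K V : Type*} [Field K] [AddCommGroup V] [Module K V]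

theorem AddMonoidHom.smul_eq_of_linearIndependent_pair (f : V →+ V) {x y : V}
    (hxy : LinearIndependent K ![x, y]) (hsum : f (x + y) ∈ K ∙ (x + y))
    {a b : K} (ha : f x = a • x) (hb : f y = b • y) : a = b := by
  obtain ⟨d, hd⟩ := mem_span_singleton.mp hsum
  have hcoeff : (a - d) • x + (b - d) • y = 0 := by
    rw [sub_smul, sub_smul, ← ha, ← hb, sub_add_sub_comm, ← smul_add, hd, map_add, sub_self]
  obtain ⟨had, hbd⟩ := LinearIndependent.pair_iff.mp hxy _ _ hcoeff
  rw [sub_eq_zero.mp had, sub_eq_zero.mp hbd]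

theorem exists_notMem_span_singleton_of_rank_ne_one (hdim : Module.rank K V ≠ 1) {x : V}
    (hx : x ≠ 0) : ∃ z, z ∉ K ∙ x := by
  by_contra! hspan
  exact hdim <| rank_eq_one_iff.mpr
    ⟨x, hx, (span_singleton_eq_top_iff K x).mp (eq_top_iff'.mpr hspan)⟩

theorem AddMonoidHom.smul_eq_of_forall_mem_span_singleton (hdim : Module.rank K V ≠ 1)
    (f : V →+ V) (hf : ∀ x : V, f x ∈ K ∙ x) {x y : V} (hx : x ≠ 0) (hy : y ≠ 0)
    {a b : K} (ha : f x = a • x) (hb : f y = b • y) : a = b := by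
  have indep {u v : V} (hu : u ≠ 0) (hv : v ∉ K ∙ u) : LinearIndependent K ![u, v] :=
    (LinearIndependent.pair_iff' hu).mpr fun c hc ↦ hv (mem_span_singleton.mpr ⟨c, hc⟩)
  by_cases hyx : y ∈ K ∙ x
  · obtain ⟨z, hzx⟩ := exists_notMem_span_singleton_of_rank_ne_one hdim hx
    have hzy : z ∉ K ∙ y := fun hzy ↦ hzx ((span_singleton_le_iff_mem y _).mpr hyx hzy)
    obtain ⟨c, hc⟩ := mem_span_singleton.mp (hf z)
    rw [f.smul_eq_of_linearIndependent_pair (indep hx hzx) (hf _) ha hc.symm,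
      f.smul_eq_of_linearIndependent_pair (indep hy hzy) (hf _) hb hc.symm]
  · exact f.smul_eq_of_linearIndependent_pair (indep hx hyx) (hf _) ha hb

end

theorem stmt_0 {K V : Type*} [Field K] [AddCommGroup V] [Module K V]
    (hdim : Module.rank K V ≠ 1)
    (f : V →+ V) (hf : ∀ x : V, f x ∈ Submodule.span K ({x} : Set V)) :
    ∃ c : K, ∀ x : V, f x = c • x := by
  rcases subsingleton_or_nontrivial V with _ | _
  · exact ⟨0, fun x ↦ Subsingleton.elim _ _⟩
  obtain ⟨x₀, hx₀⟩ := exists_ne (0 : V)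
  obtain ⟨c, hc⟩ := mem_span_singleton.mp (hf x₀)
  refine ⟨c, fun x ↦ ?_⟩
  rcases eq_or_ne x 0 with rfl | hx
  · rw [map_zero, smul_zero]
  obtain ⟨a, ha⟩ := mem_span_singleton.mp (hf x)
  rw [← ha, f.smul_eq_of_forall_mem_span_singleton hdim hf hx hx₀ ha.symm hc.symm]
end

section
/- Let K be a field and n, p positive integers. Every range-compatible K-linear map F : Mat_{n,p}(K) → K^n is local; that is, if F is linear and F(M) ∈ column space of M for all M, then there exists X ∈ K^p with F(M) = M·X for all M. -/
/-!
For fixed `y`, the map `u ↦ F (vecMulVec u y)` sends every `u` into the range of the rank-one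
matrix `vecMulVec u y`, i.e. to a multiple of `u`; a linear map with this property is a
homothety `c y • id`. Expanding `M` in the matrix units `single i j 1 = vecMulVec (Pi.single i 1)
(Pi.single j 1)` then gives `F M = M *ᵥ X` with `X j = c (Pi.single j 1)`.
-/

open Matrix

theorem LinearIndependent.not_pair_smul_right {R M : Type*} [Ring R] [Nontrivial R]
    [AddCommGroup M] [Module R M] (v : M) (c : R) : ¬LinearIndependent R ![v, c • v] := by
  rw [LinearIndependent.pair_iff]
  intro h
  simpa using (h c (-1) (by simp)).2

section RangeCompatible

variable {K m n : Type*} [Field K] [Fintype n]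

theorem exists_map_vecMulVec_eq_smul (F : Matrix m n K →ₗ[K] (m → K))
    (hF : ∀ M, F M ∈ Set.range M.mulVec) (y : n → K) :
    ∃ c : K, ∀ u, F (vecMulVec u y) = c • u := by
  obtain ⟨c, hc⟩ := LinearMap.exists_eq_smul_id_of_forall_notLinearIndependent
    (f := F ∘ₗ (vecMulVecBilin K K).flip y) fun u => by
      obtain ⟨x, hx⟩ := hF (vecMulVec u y)
      rw [vecMulVec_mulVec] at hx
      simpa [← hx] using LinearIndependent.not_pair_smul_right u (y ⬝ᵥ x)
  exact ⟨c, fun u => by simpa using LinearMap.congr_fun hc u⟩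

theorem exists_eq_mulVec_of_mem_range_mulVec [Fintype m] [DecidableEq m] [DecidableEq n]
    (F : Matrix m n K →ₗ[K] (m → K)) (hF : ∀ M, F M ∈ Set.range M.mulVec) :
    ∃ X : n → K, ∀ M, F M = M *ᵥ X := by
  choose c hc using exists_map_vecMulVec_eq_smul F hF
  refine ⟨fun j => c (Pi.single j 1), fun M => ?_⟩
  have hunit (i : m) (j : n) :
      F (single i j (M i j)) = (M i j * c (Pi.single j 1)) • Pi.single i 1 := by
    rw [show single i j (M i j) = M i j • single i j 1 by simp,
      single_eq_single_vecMulVec_single, map_smul, hc, smul_smul]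
  ext k
  conv_lhs => rw [matrix_eq_sum_single M]
  simp [map_sum, hunit, mulVec, dotProduct, Finset.sum_apply, Pi.single_apply]

end RangeCompatible

theorem stmt_2_general {K : Type*} [Field K] (n p : ℕ)
    (F : Matrix (Fin n) (Fin p) K →ₗ[K] (Fin n → K))
    (hrc : ∀ M : Matrix (Fin n) (Fin p) K, F M ∈ Set.range M.mulVec) :
    ∃ X : Fin p → K, ∀ M : Matrix (Fin n) (Fin p) K, F M = M.mulVec X :=
  exists_eq_mulVec_of_mem_range_mulVec F hrc

theorem stmt_2 {K : Type*} [Field K] (n p : ℕ) (hn : 0 < n) (hp : 0 < p)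
    (F : Matrix (Fin n) (Fin p) K →ₗ[K] (Fin n → K))
    (hrc : ∀ M : Matrix (Fin n) (Fin p) K, F M ∈ Set.range M.mulVec) :
    ∃ X : Fin p → K, ∀ M : Matrix (Fin n) (Fin p) K, F M = M.mulVec X :=
  stmt_2_general n p F hrc
end

section
/- Let K be a field and n, p positive integers with n > 1. Every range-compatible additive map F : Mat_{n,p}(K) → K^n is local; that is, if F is a group homomorphism with F(M) ∈ column space of M for all M, there exists X ∈ K^p with F(M) = MX for all M. -/
/-!
Evaluating a range-compatible map on the elementary matrix `single i j a` gives a vector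
supported on row `i`, with entry `a * v j` for some `v`. Applying range compatibility to
`single i j a + single k j b` with `i ≠ k` yields one `v` serving both rows, so the nonzero
entry is independent of the row and linear in `a`. So `F` agrees with
`M ↦ M *ᵥ X` on elementary matrices, where `X j` is the nonzero entry of `F (single i₀ j 1)`,
and both maps are additive.
-/

open Matrix

section

variable {m n R : Type*} [Fintype n] [DecidableEq m] [DecidableEq n] [NonAssocSemiring R]

def Matrix.IsRangeCompatible (F : Matrix m n R →+ (m → R)) : Prop :=
  ∀ M : Matrix m n R, F M ∈ Set.range M.mulVec

namespace Matrix.IsRangeCompatible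

variable {F : Matrix m n R →+ (m → R)} (hF : IsRangeCompatible F)
include hF

theorem apply_single_of_ne {i k : m} (hk : k ≠ i) (j : n) (a : R) :
    F (single i j a) k = 0 := by
  obtain ⟨v, hv⟩ := hF (single i j a)
  rw [← hv, single_mulVec, Function.update_of_ne hk, Pi.zero_apply]

theorem exists_apply_single_add_single {i k : m} (hik : i ≠ k) (j : n) (a b : R) :
    ∃ v : n → R, F (single i j a) i = a * v j ∧ F (single k j b) k = b * v j := by
  obtain ⟨v, hv⟩ := hF (single i j a + single k j b)
  refine ⟨v, ?_, ?_⟩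
  · simpa [add_mulVec, single_mulVec, hik, hF.apply_single_of_ne hik] using (congrFun hv i).symm
  · simpa [add_mulVec, single_mulVec, hik.symm, hF.apply_single_of_ne hik.symm] using
      (congrFun hv k).symm

theorem apply_single_self_eq (i k : m) (j : n) (a : R) :
    F (single i j a) i = F (single k j a) k := by
  rcases eq_or_ne i k with rfl | hik
  · rfl
  obtain ⟨v, hi, hk⟩ := hF.exists_apply_single_add_single hik j a a
  rw [hi, hk]

theorem apply_single_self_eq_mul [Nontrivial m] (i : m) (j : n) (a : R) :
    F (single i j a) i = a * F (single i j 1) i := by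
  obtain ⟨k, hki⟩ := exists_ne i
  obtain ⟨v, hi, hk⟩ := hF.exists_apply_single_add_single hki.symm j a 1
  rw [hi, hF.apply_single_self_eq i k, hk, one_mul]

theorem apply_single [Nontrivial m] (i₀ i : m) (j : n) (a : R) :
    F (single i j a) = single i j a *ᵥ fun j ↦ F (single i₀ j 1) i₀ := by
  funext k
  rw [single_mulVec]
  rcases eq_or_ne k i with rfl | hki
  · rw [Function.update_self, hF.apply_single_self_eq_mul, hF.apply_single_self_eq k i₀]
  · rw [Function.update_of_ne hki, Pi.zero_apply, hF.apply_single_of_ne hki]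

theorem exists_eq_mulVec [Finite m] [Nontrivial m] : ∃ X : n → R, ∀ M, F M = M *ᵥ X := by
  obtain ⟨i₀⟩ := (inferInstance : Nonempty m)
  refine ⟨fun j ↦ F (single i₀ j 1) i₀, fun M ↦ ?_⟩
  have hF_eq : F = mulVec.addMonoidHomLeft fun j ↦ F (single i₀ j 1) i₀ :=
    ext_addMonoidHom fun i j ↦ AddMonoidHom.ext (hF.apply_single i₀ i j)
  exact DFunLike.congr_fun hF_eq M

end Matrix.IsRangeCompatible

end

theorem stmt_3_general {K : Type*} [Field K] (n p : ℕ) (hn : 1 < n)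
    (F : Matrix (Fin n) (Fin p) K →+ (Fin n → K))
    (hrc : ∀ M : Matrix (Fin n) (Fin p) K, F M ∈ Set.range M.mulVec) :
    ∃ X : Fin p → K, ∀ M : Matrix (Fin n) (Fin p) K, F M = M.mulVec X := by
  have : Nontrivial (Fin n) := Fin.nontrivial_iff_two_le.mpr hn
  exact IsRangeCompatible.exists_eq_mulVec hrc

theorem stmt_3 {K : Type*} [Field K] (n p : ℕ) (hn : 1 < n) (hp : 0 < p)
    (F : Matrix (Fin n) (Fin p) K →+ (Fin n → K))
    (hrc : ∀ M : Matrix (Fin n) (Fin p) K, F M ∈ Set.range M.mulVec) :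
    ∃ X : Fin p → K, ∀ M : Matrix (Fin n) (Fin p) K, F M = M.mulVec X :=
  stmt_3_general n p hn F hrc
end

section
/- Let U := { [[a,b],[0,a]] : a,b ∈ K } ⊂ Mat_2(K) be the space of 2×2 upper-triangular matrices with equal diagonal entries, and define F : U → K^2 by F([[a,b],[0,a]]) = (b, 0). Then F is a range-compatible linear map that is not local, i.e., F(M) ∈ column space of M for every M ∈ U, but there is no X ∈ K^2 with F(M) = MX for all M ∈ U. -/
open Matrix

section
variable {R : Type*} [Semiring R]

theorem upperScalar_mulVec (a b : R) (X : Fin 2 → R) :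
    !![a, b; 0, a] *ᵥ X = ![a * X 0 + b * X 1, a * X 1] := by
  ext i
  fin_cases i <;> simp [mulVec, dotProduct]

theorem not_exists_vec_b_zero_eq_upperScalar_mulVec [Nontrivial R] :
    ¬ ∃ X : Fin 2 → R, ∀ a b : R, ![b, 0] = !![a, b; 0, a] *ᵥ X := by
  rintro ⟨X, hX⟩
  have h_nilpotent : X 1 = 1 := by
    have h := congrFun (hX 0 1) 0
    rw [upperScalar_mulVec] at h
    simpa using h.symm
  have h_identity : X 1 = 0 := by
    have h := congrFun (hX 1 0) 1
    rw [upperScalar_mulVec] at h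
    simpa using h.symm
  exact one_ne_zero (h_nilpotent.symm.trans h_identity)

end

theorem vec_b_zero_mem_range_upperScalar_mulVec {K : Type*} [DivisionRing K] (a b : K) :
    ![b, 0] ∈ Set.range (!![a, b; 0, a] *ᵥ ·) := by
  by_cases ha : a = 0
  · exact ⟨![0, 1], by simp [ha]⟩
  · exact ⟨![a⁻¹ * b, 0], by simp [mul_inv_cancel_left₀ ha]⟩

theorem stmt_6 {K : Type*} [Field K] :
    (∀ a b : K, (![b, 0] : Fin 2 → K) ∈ Set.range (!![a, b; 0, a] : Matrix (Fin 2) (Fin 2) K).mulVec)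
    ∧ ¬ ∃ X : Fin 2 → K, ∀ a b : K,
        (![b, 0] : Fin 2 → K) = (!![a, b; 0, a] : Matrix (Fin 2) (Fin 2) K).mulVec X :=
  ⟨vec_b_zero_mem_range_upperScalar_mulVec, not_exists_vec_b_zero_eq_upperScalar_mulVec⟩
end

section
/- Let K be a field of characteristic 2, n a positive integer, and α : K → K an additive map satisfying α(λ²x) = λ·α(x) for all λ, x ∈ K (α is root-linear). Then the map F : Sym_n(K) → K^n sending a symmetric matrix M to the vector (α(m_{1,1}), α(m_{2,2}), …, α(m_{n,n})) is range-compatible: F(M) lies in the column space of M for every symmetric matrix M. -/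
/-!
Over a field, `v` lies in the column space of `M` iff `y ⬝ᵥ v = 0` for every `y` with
`y ᵥ* M = 0`; for symmetric `M` these `y` form the kernel of `M`. In characteristic 2 the
quadratic form of a symmetric matrix has vanishing polar form, so it is additive and
`y ⬝ᵥ M *ᵥ y = ∑ yᵢ² mᵢᵢ`. Hence for `y` in the kernel, root-linearity of `α` gives
`∑ yᵢ α(mᵢᵢ) = α(∑ yᵢ² mᵢᵢ) = α(y ⬝ᵥ M *ᵥ y) = 0`.
-/

open Matrix

namespace Matrix

variable {K R m n : Type*} [Fintype m]

theorem mem_range_mulVec_iff [Field K] [Fintype n] (M : Matrix m n K)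
    (v : m → K) : v ∈ Set.range M.mulVec ↔ ∀ y, y ᵥ* M = 0 → y ⬝ᵥ v = 0 := by
  classical
  constructor
  · rintro ⟨x, rfl⟩ y hy
    rw [dotProduct_mulVec, hy, zero_dotProduct]
  · intro h
    by_contra hv
    obtain ⟨f, hfv, hf⟩ := Submodule.exists_dual_map_eq_bot_of_notMem
      (p := LinearMap.range M.mulVecLin) (x := v) (by simpa using hv) inferInstance
    set y := (dotProductEquiv K m).symm f
    have hf_eq : ∀ w, f w = y ⬝ᵥ w := fun w => by
      rw [← dotProductEquiv_apply_apply, LinearEquiv.apply_symm_apply]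
    have hf_range : ∀ x, y ⬝ᵥ (M *ᵥ x) = 0 := fun x => by
      rw [← hf_eq, ← Submodule.mem_bot K, ← hf]
      exact Submodule.mem_map_of_mem (LinearMap.mem_range_self M.mulVecLin x)
    refine hfv ((hf_eq v).trans (h y (funext fun j => ?_)))
    simpa only [dotProduct_mulVec, dotProduct_single, mul_one, Pi.zero_apply]
      using hf_range (Pi.single j 1)

theorem IsSymm.dotProduct_mulVec_self_add [CommRing R] [CharP R 2] {M : Matrix m m R}
    (hM : M.IsSymm) (x y : m → R) :
    (x + y) ⬝ᵥ M *ᵥ (x + y) = x ⬝ᵥ M *ᵥ x + y ⬝ᵥ M *ᵥ y := by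
  have hpolar : y ⬝ᵥ M *ᵥ x = x ⬝ᵥ M *ᵥ y := by
    rw [dotProduct_mulVec, ← mulVec_transpose, hM.eq, dotProduct_comm]
  rw [mulVec_add, add_dotProduct, dotProduct_add, dotProduct_add, hpolar]
  linear_combination CharTwo.add_self_eq_zero (x ⬝ᵥ M *ᵥ y)

theorem IsSymm.dotProduct_mulVec_self_eq_sum [CommRing R] [CharP R 2]
    {M : Matrix m m R} (hM : M.IsSymm) (y : m → R) :
    y ⬝ᵥ M *ᵥ y = ∑ i, y i ^ 2 * M i i := by
  classical
  let Q : (m → R) →+ R := AddMonoidHom.mk' (fun x => x ⬝ᵥ M *ᵥ x) hM.dotProduct_mulVec_self_add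
  calc y ⬝ᵥ M *ᵥ y = Q (∑ i, Pi.single i (y i)) := by rw [Finset.univ_sum_single]; rfl
    _ = ∑ i, y i ^ 2 * M i i := by
      rw [map_sum]
      refine Finset.sum_congr rfl fun i _ => ?_
      simp only [Q, AddMonoidHom.mk'_apply, mulVec_single, op_smul_eq_smul, dotProduct_smul,
        single_dotProduct, col_apply, smul_eq_mul]
      ring

end Matrix

theorem stmt_7_general {K : Type*} [Field K] [CharP K 2] (n : ℕ)
    (α : K → K) (hadd : ∀ x y : K, α (x + y) = α x + α y)
    (hroot : ∀ l x : K, α (l ^ 2 * x) = l * α x)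
    (M : Matrix (Fin n) (Fin n) K) (hM : M.IsSymm) :
    (fun i => α (M i i)) ∈ Set.range M.mulVec := by
  let A : K →+ K := AddMonoidHom.mk' α hadd
  rw [mem_range_mulVec_iff]
  intro y hy
  have hMy : M *ᵥ y = 0 := by rw [← vecMul_transpose, hM.eq, hy]
  calc y ⬝ᵥ (fun i => α (M i i)) = A (∑ i, y i ^ 2 * M i i) := by
        simp only [dotProduct, map_sum, A, AddMonoidHom.mk'_apply, hroot]
    _ = 0 := by rw [← hM.dotProduct_mulVec_self_eq_sum, hMy, dotProduct_zero, map_zero]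

theorem stmt_7 {K : Type*} [Field K] [CharP K 2] (n : ℕ) (hn : 0 < n)
    (α : K → K) (hadd : ∀ x y : K, α (x + y) = α x + α y)
    (hroot : ∀ l x : K, α (l ^ 2 * x) = l * α x)
    (M : Matrix (Fin n) (Fin n) K) (hM : M.IsSymm) :
    (fun i => α (M i i)) ∈ Set.range M.mulVec :=
  stmt_7_general n α hadd hroot M hM
end

section
/- Let K be a perfect field of characteristic 2 and M an n×n symmetric matrix over K. Then the vector (√m_{1,1}, …, √m_{n,n}) of square roots of the diagonal entries of M lies in the column space of M. -/
/-!
Since `M` is symmetric, its column space is the orthogonal complement of `ker M` for the dot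
product, so it suffices that `d = (√m₁₁, …, √mₙₙ)` is orthogonal to every `x` with `M x = 0`.
In characteristic 2 the off-diagonal terms of `xᵀ M x` cancel in pairs, and the Frobenius is
additive, so `(x ⬝ d)² = ∑ mᵢᵢ xᵢ² = xᵀ M x = 0`.
-/

open Matrix

theorem CharTwo.sum_offDiag_eq_zero {ι R : Type*} [Ring R] [CharP R 2] [DecidableEq ι]
    (s : Finset ι) (f : ι → ι → R) (hf : ∀ i j, f i j = f j i) :
    ∑ p ∈ s.offDiag, f p.1 p.2 = 0 :=
  Finset.sum_involution (fun p _ => p.swap)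
    (fun p _ => by rw [Prod.fst_swap, Prod.snd_swap, hf p.2, CharTwo.add_self_eq_zero])
    (fun p hp _ h => (Finset.mem_offDiag.mp hp).2.2 (congrArg Prod.fst h).symm)
    (fun p hp => by
      obtain ⟨h₁, h₂, hne⟩ := Finset.mem_offDiag.mp hp
      exact Finset.mem_offDiag.mpr ⟨h₂, h₁, hne.symm⟩)
    (fun p _ => p.swap_swap)

theorem CharTwo.sum_sum_eq_sum_diag {ι R : Type*} [Ring R] [CharP R 2]
    (s : Finset ι) (f : ι → ι → R) (hf : ∀ i j, f i j = f j i) :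
    ∑ i ∈ s, ∑ j ∈ s, f i j = ∑ i ∈ s, f i i := by
  classical
  rw [← Finset.sum_product', ← Finset.diag_union_offDiag,
    Finset.sum_union (Finset.disjoint_diag_offDiag s), Finset.sum_diag,
    CharTwo.sum_offDiag_eq_zero s f hf, add_zero]

namespace Matrix

variable {n : Type*} [Fintype n]

theorem IsSymm.dotProduct_mulVec_self_of_charTwo {R : Type*} [CommRing R] [CharP R 2]
    {M : Matrix n n R} (hM : M.IsSymm) (x : n → R) :
    x ⬝ᵥ M *ᵥ x = ∑ i, M i i * (x i * x i) := by
  simp only [dotProduct, mulVec, Finset.mul_sum]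
  rw [CharTwo.sum_sum_eq_sum_diag]
  · exact Finset.sum_congr rfl fun i _ => by ring
  · intro i j
    rw [hM.apply i j]
    ring

theorem mem_range_mulVec_of_forall_vecMul_eq_zero {K : Type*} [Field K]
    {M : Matrix n n K} {v : n → K} (hv : ∀ x, x ᵥ* M = 0 → x ⬝ᵥ v = 0) :
    v ∈ Set.range M.mulVec := by
  let B : LinearMap.BilinForm K (n → K) := dotProductBilin K K
  have hB : B.IsRefl := fun x y h => by simpa [B, dotProduct_comm] using h
  have hBnd : B.Nondegenerate :=
    hB.nondegenerate_iff_separatingLeft.mpr fun x hx => dotProduct_eq_zero x hx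
  have hW : v ∈ B.orthogonal (B.orthogonal (LinearMap.range M.mulVecLin)) := by
    intro x hx
    refine hv x (dotProduct_eq_zero _ fun y => ?_)
    rw [← dotProduct_mulVec, dotProduct_comm]
    exact hx _ ⟨y, rfl⟩
  rw [B.orthogonal_orthogonal hBnd hB] at hW
  exact hW

end Matrix

theorem stmt_8 {K : Type*} [Field K] [CharP K 2]
    (sqrt : K → K) (hsqrt : ∀ x : K, sqrt x * sqrt x = x)
    (n : ℕ) (M : Matrix (Fin n) (Fin n) K) (hM : M.IsSymm) :
    (fun i => sqrt (M i i)) ∈ Set.range M.mulVec := by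
  refine mem_range_mulVec_of_forall_vecMul_eq_zero fun x hx => mul_self_eq_zero.mp ?_
  have hMx : M *ᵥ x = 0 := by rw [← vecMul_transpose, hM.eq, hx]
  calc (x ⬝ᵥ fun i => sqrt (M i i)) * (x ⬝ᵥ fun i => sqrt (M i i))
      = ∑ i, M i i * (x i * x i) := by
        simp only [dotProduct, CharTwo.sum_mul_self]
        exact Finset.sum_congr rfl fun i _ => by
          rw [mul_mul_mul_comm, hsqrt, mul_comm]
    _ = x ⬝ᵥ M *ᵥ x := (hM.dotProduct_mulVec_self_of_charTwo x).symm
    _ = 0 := by rw [hMx, dotProduct_zero]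
end

section
/- Let K be a field of characteristic not 2 and n ≥ 2. Every range-compatible group homomorphism F : Sym_n(K) → K^n is local: if F is additive and F(M) lies in the column space of M for every symmetric n×n matrix M, then there exists X ∈ K^n with F(M) = MX for all M ∈ Sym_n(K). -/
/-!
Range compatibility confines `F (c • Eᵢᵢ)` to the line `K eᵢ` and `F (c • (Eᵢⱼ + Eⱼᵢ))` to the
plane `K eᵢ + K eⱼ`. Applied to the rank-one matrix `c (eᵢ + t eⱼ)(eᵢ + t eⱼ)ᵀ`, whose range is
the line through `eᵢ + t eⱼ`, it yields a functional equation between four additive coefficient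
functions `K → K`; comparing it at `t`, `1` and `t + 1` shows (using `2 ≠ 0`) that they are all
linear. So `F` agrees with `M ↦ M X`, where `Xₖ = F(Eₖₖ)ₖ`, on every `c • (Eᵢⱼ + Eⱼᵢ)`, and these
matrices generate `2 M = M + Mᵀ` for every symmetric `M`.
-/

open Matrix

namespace Matrix

variable {ι α : Type*}

theorem isSymm_sum [AddCommMonoid α] {β : Type*} (s : Finset β) {A : β → Matrix ι ι α}
    (hA : ∀ b ∈ s, (A b).IsSymm) : (∑ b ∈ s, A b).IsSymm :=
  Finset.sum_induction A IsSymm (fun _ _ => IsSymm.add) isSymm_zero hA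

variable [DecidableEq ι]

section AddCommMonoid

variable [AddCommMonoid α]

def symmSingle (i j : ι) (c : α) : Matrix ι ι α :=
  single i j c + single j i c

theorem isSymm_single (i : ι) (c : α) : (single i i c).IsSymm := by
  simp [IsSymm]

theorem isSymm_symmSingle (i j : ι) (c : α) : (symmSingle i j c).IsSymm := by
  simp [symmSingle, IsSymm, add_comm]

theorem symmSingle_add (i j : ι) (c d : α) :
    symmSingle i j (c + d) = symmSingle i j c + symmSingle i j d := by
  simp only [symmSingle, single_add]
  abel

theorem symmSingle_self (i : ι) (c : α) : symmSingle i i c = single i i (c + c) := by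
  rw [symmSingle, single_add]

theorem add_transpose_eq_sum_symmSingle [Fintype ι] (M : Matrix ι ι α) :
    M + Mᵀ = ∑ i, ∑ j, symmSingle i j (M i j) := by
  conv_lhs => rw [matrix_eq_sum_single M]
  simp only [transpose_sum, transpose_single, symmSingle, Finset.sum_add_distrib]

end AddCommMonoid

theorem symmSingle_mulVec_apply [Fintype ι] [NonUnitalNonAssocSemiring α] (i j : ι) (c : α)
    (x : ι → α) (k : ι) :
    (symmSingle i j c *ᵥ x) k = (if k = i then c * x j else 0) + (if k = j then c * x i else 0) :=
  by simp [symmSingle, add_mulVec, single_mulVec, Function.update_apply]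

end Matrix

section FunctionalEquation

variable {K : Type*} [Field K] {a b p q : K → K}

theorem two_mul_eq_of_rankOne_identity (hb : ∀ x y, b (x + y) = b x + b y)
    (hp : ∀ x y, p (x + y) = p x + p y) (hq : ∀ x y, q (x + y) = q x + q y)
    (h : ∀ c t, b (c * t ^ 2) + q (c * t) = t * (a c + p (c * t))) (c t : K) :
    2 * b (c * t) = p (c * t) + t * p c := by
  have h1 := h c 1
  have h3 := h c (t + 1)
  rw [show c * (t + 1) ^ 2 = c * t ^ 2 + (c * t + (c * t + c)) by ring,
    show c * (t + 1) = c * t + c by ring, hb, hb, hb, hq, hp] at h3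
  simp only [one_pow, mul_one, one_mul] at h1
  linear_combination h3 - h c t - h1

theorem mul_eq_of_rankOne_identity (h2 : (2 : K) ≠ 0) (hb : ∀ x y, b (x + y) = b x + b y)
    (hp : ∀ x y, p (x + y) = p x + p y) (hq : ∀ x y, q (x + y) = q x + q y)
    (h : ∀ c t, b (c * t ^ 2) + q (c * t) = t * (a c + p (c * t))) (c : K) :
    a c = c * a 1 ∧ p c = c * b 1 ∧ q c = c * a 1 := by
  have htwo := two_mul_eq_of_rankOne_identity hb hp hq h
  have hbp (x : K) : b x = p x := by
    have := htwo x 1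
    simp only [mul_one, one_mul] at this
    exact mul_left_cancel₀ h2 (by linear_combination this)
  have hp_mul (x t : K) : p (x * t) = t * p x := by
    linear_combination htwo x t - 2 * hbp (x * t)
  have hq_mul (x t : K) : q (x * t) = t * a x := by
    linear_combination h x t - hbp (x * t ^ 2) - hp_mul x (t ^ 2) + t * hp_mul x t
  have hq_one := hq_mul 1 c
  have hq_self := hq_mul c 1
  simp only [one_mul, mul_one] at hq_one hq_self
  refine ⟨hq_self.symm.trans hq_one, ?_, hq_one⟩
  simpa only [one_mul, hbp 1] using hp_mul 1 c

end FunctionalEquation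

def AdditiveOnSymm {ι α β : Type*} [Add α] [Add β] (F : Matrix ι ι α → β) : Prop :=
  ∀ M N : Matrix ι ι α, M.IsSymm → N.IsSymm → F (M + N) = F M + F N

def RangeCompatibleOnSymm {ι K : Type*} [Fintype ι] [Semiring K] (F : Matrix ι ι K → ι → K) :
    Prop :=
  ∀ M : Matrix ι ι K, M.IsSymm → F M ∈ Set.range M.mulVec

def diagCoeffs {ι K : Type*} [DecidableEq ι] [Zero K] [One K] (F : Matrix ι ι K → ι → K) :
    ι → K :=
  fun k => F (single k k 1) k

namespace AdditiveOnSymm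

section

variable {ι α β : Type*} [AddCommMonoid α] [AddCommGroup β] {F : Matrix ι ι α → β}

theorem map_zero (hF : AdditiveOnSymm F) : F 0 = 0 := by
  simpa using hF 0 0 isSymm_zero isSymm_zero

theorem map_sum (hF : AdditiveOnSymm F) {γ : Type*} (s : Finset γ) {A : γ → Matrix ι ι α}
    (hA : ∀ x ∈ s, (A x).IsSymm) : F (∑ x ∈ s, A x) = ∑ x ∈ s, F (A x) := by
  classical
  induction s using Finset.induction_on with
  | empty => simpa using hF.map_zero
  | insert x s hx ih =>
    rw [Finset.forall_mem_insert] at hA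
    rw [Finset.sum_insert hx, Finset.sum_insert hx, hF _ _ hA.1 (isSymm_sum s hA.2), ih hA.2]

end

theorem eq_mulVec_of_symmSingle {ι K : Type*} [Fintype ι] [DecidableEq ι] [Field K]
    {F : Matrix ι ι K → ι → K} (hF : AdditiveOnSymm F) (h2 : (2 : K) ≠ 0) {X : ι → K}
    (hX : ∀ i j c, F (symmSingle i j c) = symmSingle i j c *ᵥ X) {M : Matrix ι ι K}
    (hM : M.IsSymm) : F M = M *ᵥ X := by
  have hsum : M + M = ∑ i, ∑ j, symmSingle i j (M i j) := by
    rw [← add_transpose_eq_sum_symmSingle, hM.eq]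
  have hrow i : (∑ j, symmSingle i j (M i j)).IsSymm :=
    isSymm_sum _ fun j _ => isSymm_symmSingle i j _
  have h : (2 : K) • F M = (2 : K) • (M *ᵥ X) := by
    calc (2 : K) • F M = F (M + M) := by rw [two_smul, hF M M hM hM]
      _ = ∑ i, ∑ j, F (symmSingle i j (M i j)) := by
        rw [hsum, hF.map_sum _ fun i _ => hrow i]
        exact Finset.sum_congr rfl fun i _ => hF.map_sum _ fun j _ => isSymm_symmSingle i j _
      _ = (M + M) *ᵥ X := by simp only [hX, hsum, sum_mulVec]
      _ = (2 : K) • (M *ᵥ X) := by rw [add_mulVec, two_smul]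
  exact smul_right_injective _ h2 h

end AdditiveOnSymm

namespace RangeCompatibleOnSymm

variable {ι : Type*} [Fintype ι]

section Semiring

variable {K : Type*} [Semiring K] {F : Matrix ι ι K → ι → K}

theorem apply_eq_zero_of_row_eq_zero (hF : RangeCompatibleOnSymm F) {M : Matrix ι ι K}
    (hM : M.IsSymm) {k : ι} (hk : M k = 0) : F M k = 0 := by
  obtain ⟨y, hy⟩ := hF M hM
  simp [← hy, mulVec, hk]

variable [DecidableEq ι]

theorem apply_single_eq_zero_of_ne (hF : RangeCompatibleOnSymm F) {i k : ι} (hk : k ≠ i)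
    (c : K) : F (single i i c) k = 0 :=
  hF.apply_eq_zero_of_row_eq_zero (isSymm_single i c) <|
    funext fun _ => single_apply_of_row_ne hk.symm _ _ _

theorem apply_symmSingle_eq_zero_of_ne (hF : RangeCompatibleOnSymm F) {i j k : ι} (hki : k ≠ i)
    (hkj : k ≠ j) (c : K) : F (symmSingle i j c) k = 0 :=
  hF.apply_eq_zero_of_row_eq_zero (isSymm_symmSingle i j c) <| funext fun _ => by
    simp [symmSingle, single_apply_of_row_ne hki.symm, single_apply_of_row_ne hkj.symm]

end Semiring

variable [DecidableEq ι] {K : Type*} [Field K] {F : Matrix ι ι K → ι → K}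

theorem rankOne_identity (hF : RangeCompatibleOnSymm F) (hadd : AdditiveOnSymm F) {i j : ι}
    (hij : i ≠ j) (c t : K) :
    F (single j j (c * t ^ 2)) j + F (symmSingle i j (c * t)) j =
      t * (F (single i i c) i + F (symmSingle i j (c * t)) i) := by
  -- `W = c (eᵢ + t eⱼ)(eᵢ + t eⱼ)ᵀ`
  set W := single i i c + (single j j (c * t ^ 2) + symmSingle i j (c * t)) with hW
  have hWs : W.IsSymm :=
    (isSymm_single i c).add ((isSymm_single j _).add (isSymm_symmSingle i j _))
  have hFW :
      F W = F (single i i c) + (F (single j j (c * t ^ 2)) + F (symmSingle i j (c * t))) := by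
    rw [hW, hadd _ _ (isSymm_single i c) ((isSymm_single j _).add (isSymm_symmSingle i j _)),
      hadd _ _ (isSymm_single j _) (isSymm_symmSingle i j _)]
  obtain ⟨y, hy⟩ := hF W hWs
  have hWy : (W *ᵥ y) j = t * (W *ᵥ y) i := by
    simp only [hW, symmSingle, add_mulVec, single_mulVec, Pi.add_apply, Pi.zero_apply,
      Function.update_self, Function.update_of_ne hij, Function.update_of_ne hij.symm, zero_add,
      add_zero]
    ring
  rw [hy, hFW] at hWy
  simpa [hF.apply_single_eq_zero_of_ne hij, hF.apply_single_eq_zero_of_ne hij.symm] using hWy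

theorem coeffs_eq_mul_diagCoeffs (hF : RangeCompatibleOnSymm F) (hadd : AdditiveOnSymm F)
    (h2 : (2 : K) ≠ 0) {i j : ι} (hij : i ≠ j) (c : K) :
    F (single i i c) i = c * diagCoeffs F i ∧ F (symmSingle i j c) i = c * diagCoeffs F j ∧
      F (symmSingle i j c) j = c * diagCoeffs F i := by
  refine mul_eq_of_rankOne_identity (a := fun c => F (single i i c) i)
    (b := fun c => F (single j j c) j) (p := fun c => F (symmSingle i j c) i)
    (q := fun c => F (symmSingle i j c) j) h2 (fun x y => ?_) (fun x y => ?_) (fun x y => ?_)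
    (hF.rankOne_identity hadd hij) c
  · rw [single_add, hadd _ _ (isSymm_single _ _) (isSymm_single _ _), Pi.add_apply]
  all_goals rw [symmSingle_add, hadd _ _ (isSymm_symmSingle _ _ _) (isSymm_symmSingle _ _ _),
    Pi.add_apply]

theorem apply_single_eq_mulVec (hF : RangeCompatibleOnSymm F) (hadd : AdditiveOnSymm F)
    (h2 : (2 : K) ≠ 0) [Nontrivial ι] (i : ι) (c : K) :
    F (single i i c) = single i i c *ᵥ diagCoeffs F := by
  obtain ⟨j, hji⟩ := exists_ne i
  ext k
  rcases eq_or_ne k i with rfl | hki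
  · simpa [single_mulVec] using (hF.coeffs_eq_mul_diagCoeffs hadd h2 hji.symm c).1
  · simp [hF.apply_single_eq_zero_of_ne hki, single_mulVec, hki]

theorem apply_symmSingle_eq_mulVec_of_ne (hF : RangeCompatibleOnSymm F)
    (hadd : AdditiveOnSymm F) (h2 : (2 : K) ≠ 0) {i j : ι} (hij : i ≠ j) (c : K) :
    F (symmSingle i j c) = symmSingle i j c *ᵥ diagCoeffs F := by
  obtain ⟨-, hi, hj⟩ := hF.coeffs_eq_mul_diagCoeffs hadd h2 hij c
  ext k
  rcases eq_or_ne k i with rfl | hki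
  · simpa [symmSingle_mulVec_apply, hij] using hi
  rcases eq_or_ne k j with rfl | hkj
  · simpa [symmSingle_mulVec_apply, hki] using hj
  simp [hF.apply_symmSingle_eq_zero_of_ne hki hkj, symmSingle_mulVec_apply, hki, hkj]

theorem apply_symmSingle_eq_mulVec (hF : RangeCompatibleOnSymm F) (hadd : AdditiveOnSymm F)
    (h2 : (2 : K) ≠ 0) [Nontrivial ι] (i j : ι) (c : K) :
    F (symmSingle i j c) = symmSingle i j c *ᵥ diagCoeffs F := by
  rcases eq_or_ne i j with rfl | hij
  · rw [symmSingle_self]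
    exact hF.apply_single_eq_mulVec hadd h2 i _
  · exact hF.apply_symmSingle_eq_mulVec_of_ne hadd h2 hij c

end RangeCompatibleOnSymm

theorem stmt_9 {K : Type*} [Field K] (hchar : ringChar K ≠ 2) (n : ℕ) (hn : 2 ≤ n)
    (F : Matrix (Fin n) (Fin n) K → (Fin n → K))
    (hadd : ∀ M N : Matrix (Fin n) (Fin n) K, M.IsSymm → N.IsSymm → F (M + N) = F M + F N)
    (hrc : ∀ M : Matrix (Fin n) (Fin n) K, M.IsSymm → F M ∈ Set.range M.mulVec) :
    ∃ X : Fin n → K, ∀ M : Matrix (Fin n) (Fin n) K, M.IsSymm → F M = M.mulVec X := by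
  have h2 : (2 : K) ≠ 0 := Ring.two_ne_zero hchar
  have : Nontrivial (Fin n) := Fin.nontrivial_iff_two_le.mpr hn
  exact ⟨diagCoeffs F, fun M hM => AdditiveOnSymm.eq_mulVec_of_symmSingle hadd h2
    (RangeCompatibleOnSymm.apply_symmSingle_eq_mulVec hrc hadd h2) hM⟩
end

section
/- Let q be a nonzero quadratic form on a finite-dimensional vector space V over F_2 with dim V = n. Then the set q⁻¹({1}) is not contained in any linear subspace of V of dimension n − 2. -/
/-!
Over `𝔽₂` the hypothesis says that `q` vanishes off `W`. For `w ∈ W` and `y ∉ W` we then have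
`w + y ∉ W`, so the polar form gives `b(w, y) = -q(w)`. Since `W` has codimension `2`, there are
`u, v` with `u`, `v`, `u + v` all outside `W`, and additivity `b(w, u + v) = b(w, u) + b(w, v)`
forces `q(w) = 0`. (When `dim V < 2`, `W = 0` and `q` vanishes off `0` already.)
-/

theorem Submodule.exists_notMem_of_finrank_lt {K V : Type*} [DivisionRing K] [AddCommGroup V]
    [Module K V] (S : Submodule K V) (hS : Module.finrank K S < Module.finrank K V) :
    ∃ x : V, x ∉ S :=
  SetLike.exists_not_mem_of_ne_top S fun h => by rw [h, finrank_top] at hS; exact hS.false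

theorem Submodule.exists_notMem_notMem_add_notMem_of_finrank_add_two_le
    {K V : Type*} [DivisionRing K] [AddCommGroup V] [Module K V] [FiniteDimensional K V]
    (W : Submodule K V) (hW : Module.finrank K W + 2 ≤ Module.finrank K V) :
    ∃ u v : V, u ∉ W ∧ v ∉ W ∧ u + v ∉ W := by
  obtain ⟨u, hu⟩ := W.exists_notMem_of_finrank_lt (by omega)
  have hspan : Module.finrank K (W ⊔ K ∙ u : Submodule K V) < Module.finrank K V := by
    have := Submodule.finrank_add_le_finrank_add_finrank W (K ∙ u)
    have := finrank_span_le_card (R := K) ({u} : Set V)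
    simp only [Set.toFinset_singleton, Finset.card_singleton] at this
    omega
  obtain ⟨v, hv⟩ := (W ⊔ K ∙ u).exists_notMem_of_finrank_lt hspan
  refine ⟨u, v, hu, fun hvW => hv (mem_sup_left hvW), fun huv => hv ?_⟩
  rw [← add_sub_cancel_left u v]
  exact sub_mem (mem_sup_left huv) (mem_sup_right (mem_span_singleton_self u))

theorem QuadraticMap.eq_zero_of_forall_notMem_apply_eq_zero
    {R M N : Type*} [CommRing R] [AddCommGroup M] [Module R M] [AddCommGroup N] [Module R N]
    (Q : QuadraticMap R M N) {W : Submodule R M} {u v : M}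
    (hu : u ∉ W) (hv : v ∉ W) (huv : u + v ∉ W) (hQ : ∀ x ∉ W, Q x = 0) : Q = 0 := by
  ext x
  by_cases hx : x ∈ W
  swap
  · exact hQ x hx
  have hpolar : ∀ y ∉ W, polar Q x y = -Q x := fun y hy => by
    rw [polar, hQ y hy, hQ (x + y) fun h => hy ((W.add_mem_iff_right hx).mp h)]
    abel
  have := polar_add_right Q x u v
  rw [hpolar _ hu, hpolar _ hv, hpolar _ huv] at this
  simpa using this

theorem stmt_13 {V : Type*} [AddCommGroup V] [Module (ZMod 2) V]
    [FiniteDimensional (ZMod 2) V]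
    (q : QuadraticForm (ZMod 2) V) (hq : q ≠ 0)
    (W : Submodule (ZMod 2) V)
    (hW : Module.finrank (ZMod 2) W = Module.finrank (ZMod 2) V - 2) :
    ¬ (∀ x : V, q x = 1 → x ∈ W) := by
  intro hsub
  have hoff : ∀ x ∉ W, q x = 0 := fun x hx => by
    by_contra hqx
    exact hx (hsub x (Fin.eq_one_of_ne_zero _ hqx))
  rcases lt_or_ge (Module.finrank (ZMod 2) V) 2 with hV | hV
  · have hbot : W = ⊥ := Submodule.finrank_eq_zero.mp (by omega)
    refine hq (QuadraticMap.ext fun x => ?_)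
    by_cases hx : x = 0
    · simp [hx]
    · exact hoff x (by simpa [hbot] using hx)
  · obtain ⟨u, v, hu, hv, huv⟩ :=
      W.exists_notMem_notMem_add_notMem_of_finrank_add_two_le (by omega)
    exact hq (q.eq_zero_of_forall_notMem_apply_eq_zero hu hv huv hoff)
end

section
/- Let K be a field, and define K₃ := { [[a,0],[0,b],[c,c]] : a,b,c ∈ K } ⊂ Mat_{3,2}(K). Then every range-compatible group homomorphism F : K₃ → K^3 is local: there exists X ∈ K^2 with F(M) = MX for all M ∈ K₃. -/
/-!
Additivity splits `F (k3 a b c)` into `F (k3 a 0 0) + F (k3 0 b 0) + F (k3 0 0 c)`, and range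
compatibility of the three summands shows that the coordinates of `F (k3 a b c)` are `f a`, `g b`,
`h c` for functions `f g h` of one variable each. Range compatibility of `k3 a b c` then gives
`x y` with `f a = a x`, `g b = b y`, `h c = c (x + y)`. Taking `b = c = 1` forces
`x = h 1 - g 1 = f 1`, and symmetrically `y = g 1`, so `X = (f 1, g 1)` works for every matrix.
-/

open Matrix

section

variable {R : Type*} [CommRing R]

def k3 (a b c : R) : Matrix (Fin 3) (Fin 2) R := !![a, 0; 0, b; c, c]

theorem k3_add (a b c a' b' c' : R) : k3 a b c + k3 a' b' c' = k3 (a + a') (b + b') (c + c') := by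
  ext i j
  fin_cases i <;> fin_cases j <;> simp [k3]

theorem k3_mulVec (a b c : R) (v : Fin 2 → R) :
    k3 a b c *ᵥ v = ![a * v 0, b * v 1, c * (v 0 + v 1)] := by
  ext i
  fin_cases i <;> simp [k3, mulVec, dotProduct, Fin.sum_univ_two, mul_add]

theorem exists_forall_of_forall_exists_mul (f g h : R → R)
    (H : ∀ a b c, ∃ x y, f a = a * x ∧ g b = b * y ∧ h c = c * (x + y)) :
    ∃ x y, ∀ a b c, f a = a * x ∧ g b = b * y ∧ h c = c * (x + y) := by
  refine ⟨f 1, g 1, fun a b c => ⟨?_, ?_, ?_⟩⟩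
  · obtain ⟨x, y, hf, hg, hh⟩ := H a 1 1
    obtain ⟨x₁, y₁, hf₁, hg₁, hh₁⟩ := H 1 1 1
    rw [hf, show x = f 1 by linear_combination hg - hh + hh₁ - hg₁ - hf₁]
  · obtain ⟨x, y, hf, hg, hh⟩ := H 1 b 1
    obtain ⟨x₁, y₁, hf₁, hg₁, hh₁⟩ := H 1 1 1
    rw [hg, show y = g 1 by linear_combination hf - hh + hh₁ - hf₁ - hg₁]
  · obtain ⟨x, y, hf, hg, hh⟩ := H 1 1 c
    rw [hh, hf, hg, one_mul, one_mul]

theorem exists_forall_eq_of_add_of_forall_exists (Φ : R → R → R → Fin 3 → R)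
    (hadd : ∀ a b c a' b' c', Φ (a + a') (b + b') (c + c') = Φ a b c + Φ a' b' c')
    (hrc : ∀ a b c, ∃ x y, Φ a b c = ![a * x, b * y, c * (x + y)]) :
    ∃ x y, ∀ a b c, Φ a b c = ![a * x, b * y, c * (x + y)] := by
  have hsplit : ∀ a b c, Φ a b c = ![Φ a 0 0 0, Φ 0 b 0 1, Φ 0 0 c 2] := by
    intro a b c
    obtain ⟨x₁, y₁, h₁⟩ := hrc a 0 0
    obtain ⟨x₂, y₂, h₂⟩ := hrc 0 b 0
    obtain ⟨x₃, y₃, h₃⟩ := hrc 0 0 c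
    have : Φ a b c = Φ a 0 0 + Φ 0 b 0 + Φ 0 0 c := by
      rw [← hadd, ← hadd]
      simp only [add_zero, zero_add]
    rw [this, h₁, h₂, h₃]
    ext i
    fin_cases i <;> simp
  obtain ⟨x, y, hxy⟩ := exists_forall_of_forall_exists_mul (Φ · 0 0 0) (Φ 0 · 0 1) (Φ 0 0 · 2)
    fun a b c => by
      obtain ⟨x, y, h⟩ := hrc a b c
      rw [hsplit] at h
      exact ⟨x, y, congrFun h 0, congrFun h 1, congrFun h 2⟩
  refine ⟨x, y, fun a b c => ?_⟩
  obtain ⟨hf, hg, hh⟩ := hxy a b c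
  rw [hsplit, hf, hg, hh]

end

theorem stmt_15 {K : Type*} [Field K]
    (F : Matrix (Fin 3) (Fin 2) K → (Fin 3 → K))
    (hadd : ∀ M N : Matrix (Fin 3) (Fin 2) K,
      (∃ a b c : K, M = !![a, 0; 0, b; c, c]) →
      (∃ a b c : K, N = !![a, 0; 0, b; c, c]) →
      F (M + N) = F M + F N)
    (hrc : ∀ M : Matrix (Fin 3) (Fin 2) K,
      (∃ a b c : K, M = !![a, 0; 0, b; c, c]) → F M ∈ Set.range M.mulVec) :
    ∃ X : Fin 2 → K, ∀ M : Matrix (Fin 3) (Fin 2) K,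
      (∃ a b c : K, M = !![a, 0; 0, b; c, c]) → F M = M.mulVec X := by
  obtain ⟨x, y, hxy⟩ := exists_forall_eq_of_add_of_forall_exists (fun a b c => F (k3 a b c))
    (fun a b c a' b' c' => by
      rw [← k3_add]
      exact hadd _ _ ⟨a, b, c, rfl⟩ ⟨a', b', c', rfl⟩)
    (fun a b c => by
      obtain ⟨v, hv⟩ := hrc (k3 a b c) ⟨a, b, c, rfl⟩
      exact ⟨v 0, v 1, by rw [← hv, k3_mulVec]⟩)
  refine ⟨![x, y], ?_⟩
  rintro M ⟨a, b, c, rfl⟩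
  exact (hxy a b c).trans (k3_mulVec a b c ![x, y]).symm
end

section
/- Let K be a field, and define K₄ := { [[b,c],[a,0],[0,a]] : a,b,c ∈ K } ⊂ Mat_{3,2}(K). Then every range-compatible group homomorphism F : K₄ → K^3 is local. -/
/-!
Write `f a b c` for the image of `!![b, c; a, 0; 0, a]`. Additivity splits `f a b c` into
`f a 0 0 + f 0 b 0 + f 0 0 c`, and range compatibility puts `f a 0 0` in the span of the last two
coordinates and `f 0 b 0`, `f 0 0 c` in that of the first. The matrices with `a = 1`, or with
`(b, c) ∈ {(1, 0), (0, 1)}`, have images in which one coordinate is a fixed multiple of another;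
comparing coordinates of the split then makes every piece linear, with coefficients
`X = (f 1 0 0 1, f 1 0 0 2)`.
-/

section

open Matrix

variable {R : Type*} [Semiring R]

def k4Matrix (a b c : R) : Matrix (Fin 3) (Fin 2) R := !![b, c; a, 0; 0, a]

lemma k4Matrix_add (a b c a' b' c' : R) :
    k4Matrix a b c + k4Matrix a' b' c' = k4Matrix (a + a') (b + b') (c + c') := by
  ext i j
  fin_cases i <;> fin_cases j <;> simp [k4Matrix]

lemma k4Matrix_mulVec (a b c : R) (v : Fin 2 → R) :
    k4Matrix a b c *ᵥ v = ![b * v 0 + c * v 1, a * v 0, a * v 1] := by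
  ext i
  fin_cases i <;> simp [k4Matrix, mulVec, dotProduct, Fin.sum_univ_two]

lemma exists_of_mem_range_k4Matrix_mulVec {a b c : R} {w : Fin 3 → R}
    (hw : w ∈ Set.range (k4Matrix a b c).mulVec) :
    ∃ v : Fin 2 → R, w 0 = b * v 0 + c * v 1 ∧ w 1 = a * v 0 ∧ w 2 = a * v 1 := by
  obtain ⟨v, rfl⟩ := hw
  exact ⟨v, by simp [k4Matrix_mulVec]⟩

section RangeCompatible

variable (f : R → R → R → Fin 3 → R)

lemma apply_zero_b_zero
    (hadd : ∀ a b c a' b' c', f (a + a') (b + b') (c + c') = f a b c + f a' b' c')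
    (hrc : ∀ a b c, f a b c ∈ Set.range (k4Matrix a b c).mulVec) (b : R) :
    f 0 b 0 = ![b * f 1 0 0 1, 0, 0] := by
  obtain ⟨_, h0, -, -⟩ := exists_of_mem_range_k4Matrix_mulVec (hrc 1 0 0)
  obtain ⟨_, -, h1, h2⟩ := exists_of_mem_range_k4Matrix_mulVec (hrc 0 b 0)
  obtain ⟨v, hv0, hv1, -⟩ := exists_of_mem_range_k4Matrix_mulVec (hrc 1 b 0)
  have hsplit : f 1 b 0 = f 1 0 0 + f 0 b 0 := by simpa using hadd 1 0 0 0 b 0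
  simp only [hsplit, Pi.add_apply, zero_mul, add_zero, one_mul] at h0 h1 h2 hv0 hv1
  rw [h0, zero_add] at hv0
  rw [h1, add_zero] at hv1
  ext i
  fin_cases i <;> simp [hv0, hv1, h1, h2]

lemma apply_zero_zero_c
    (hadd : ∀ a b c a' b' c', f (a + a') (b + b') (c + c') = f a b c + f a' b' c')
    (hrc : ∀ a b c, f a b c ∈ Set.range (k4Matrix a b c).mulVec) (c : R) :
    f 0 0 c = ![c * f 1 0 0 2, 0, 0] := by
  obtain ⟨_, h0, -, -⟩ := exists_of_mem_range_k4Matrix_mulVec (hrc 1 0 0)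
  obtain ⟨_, -, h1, h2⟩ := exists_of_mem_range_k4Matrix_mulVec (hrc 0 0 c)
  obtain ⟨v, hv0, -, hv2⟩ := exists_of_mem_range_k4Matrix_mulVec (hrc 1 0 c)
  have hsplit : f 1 0 c = f 1 0 0 + f 0 0 c := by simpa using hadd 1 0 0 0 0 c
  simp only [hsplit, Pi.add_apply, zero_mul, zero_add, add_zero, one_mul] at h0 h1 h2 hv0 hv2
  rw [h0, zero_add] at hv0
  rw [h2, add_zero] at hv2
  ext i
  fin_cases i <;> simp [hv0, hv2, h1, h2]

lemma apply_a_zero_zero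
    (hadd : ∀ a b c a' b' c', f (a + a') (b + b') (c + c') = f a b c + f a' b' c')
    (hrc : ∀ a b c, f a b c ∈ Set.range (k4Matrix a b c).mulVec) (a : R) :
    f a 0 0 = ![0, a * f 1 0 0 1, a * f 1 0 0 2] := by
  obtain ⟨_, h0, -, -⟩ := exists_of_mem_range_k4Matrix_mulVec (hrc a 0 0)
  obtain ⟨v, hv0, hv1, -⟩ := exists_of_mem_range_k4Matrix_mulVec (hrc a 1 0)
  obtain ⟨w, hw0, -, hw2⟩ := exists_of_mem_range_k4Matrix_mulVec (hrc a 0 1)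
  have hsplit1 : f a 1 0 = f a 0 0 + f 0 1 0 := by simpa using hadd a 0 0 0 1 0
  have hsplit2 : f a 0 1 = f a 0 0 + f 0 0 1 := by simpa using hadd a 0 0 0 0 1
  simp only [hsplit1, hsplit2, apply_zero_b_zero f hadd hrc, apply_zero_zero_c f hadd hrc,
    Pi.add_apply, zero_mul, add_zero, zero_add, one_mul, cons_val_zero, cons_val_one, cons_val]
    at h0 hv0 hv1 hw0 hw2
  rw [h0, zero_add] at hv0 hw0
  ext i
  fin_cases i <;> simp [h0, hv1, hw2, hv0, hw0]

theorem eq_k4Matrix_mulVec_of_rangeCompatible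
    (hadd : ∀ a b c a' b' c', f (a + a') (b + b') (c + c') = f a b c + f a' b' c')
    (hrc : ∀ a b c, f a b c ∈ Set.range (k4Matrix a b c).mulVec) (a b c : R) :
    f a b c = k4Matrix a b c *ᵥ ![f 1 0 0 1, f 1 0 0 2] := by
  have hsplit : f a b c = f a 0 0 + f 0 b 0 + f 0 0 c := by
    rw [← hadd, ← hadd]
    simp
  rw [hsplit, apply_a_zero_zero f hadd hrc, apply_zero_b_zero f hadd hrc,
    apply_zero_zero_c f hadd hrc, k4Matrix_mulVec]
  ext i
  fin_cases i <;> simp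

end RangeCompatible

end

theorem stmt_16 {K : Type*} [Field K]
    (F : Matrix (Fin 3) (Fin 2) K → (Fin 3 → K))
    (hadd : ∀ M N : Matrix (Fin 3) (Fin 2) K,
      (∃ a b c : K, M = !![b, c; a, 0; 0, a]) →
      (∃ a b c : K, N = !![b, c; a, 0; 0, a]) →
      F (M + N) = F M + F N)
    (hrc : ∀ M : Matrix (Fin 3) (Fin 2) K,
      (∃ a b c : K, M = !![b, c; a, 0; 0, a]) → F M ∈ Set.range M.mulVec) :
    ∃ X : Fin 2 → K, ∀ M : Matrix (Fin 3) (Fin 2) K,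
      (∃ a b c : K, M = !![b, c; a, 0; 0, a]) → F M = M.mulVec X := by
  have hadd' (a b c a' b' c' : K) :
      F (k4Matrix (a + a') (b + b') (c + c')) = F (k4Matrix a b c) + F (k4Matrix a' b' c') := by
    rw [← k4Matrix_add]
    exact hadd _ _ ⟨a, b, c, rfl⟩ ⟨a', b', c', rfl⟩
  have hrc' (a b c : K) := hrc (k4Matrix a b c) ⟨a, b, c, rfl⟩
  refine ⟨![F (k4Matrix 1 0 0) 1, F (k4Matrix 1 0 0) 2], ?_⟩
  rintro M ⟨a, b, c, rfl⟩
  exact eq_k4Matrix_mulVec_of_rangeCompatible (fun a b c => F (k4Matrix a b c)) hadd' hrc' a b c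
end

section
/- Let K be a field, S a linear subspace of Mat_{n,p}(K), i ∈ {1,…,n}, and F : S → K^n a range-compatible group homomorphism. Then there exists a group homomorphism F_i : L_i(S) → K, where L_i(S) = { i-th row of M : M ∈ S }, such that the i-th entry of F(M) equals F_i(i-th row of M) for all M ∈ S. -/
/-!
The i-th entry of a range-compatible map only depends on the i-th row: if that row of `M` vanishes,
then so does the i-th entry of every vector `M *ᵥ x`, in particular of `F M`. By additivity, `F M i`
is then a well-defined additive function of the row `M i`, which is extended by zero off `L_i(S)`.
-/

theorem AddMonoidHom.factorsThrough_of_ker_le {A B C : Type*} [AddGroup A] [AddGroup B] [AddGroup C]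
    (f : A →+ C) (g : A →+ B) (hker : f.ker ≤ g.ker) : Function.FactorsThrough g f := by
  intro a b hab
  have hsub : f (a - b) = 0 := by rw [map_sub, hab, sub_self]
  have : g (a - b) = 0 := hker hsub
  rwa [map_sub, sub_eq_zero] at this

theorem AddMonoidHom.exists_additiveOn_range_comp_eq {A B C : Type*} [AddGroup A] [AddGroup B]
    [AddGroup C] (f : A →+ C) (g : A →+ B) (hker : f.ker ≤ g.ker) :
    ∃ h : C → B, (∀ x ∈ Set.range f, ∀ y ∈ Set.range f, h (x + y) = h x + h y) ∧
      ∀ a, g a = h (f a) := by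
  have hg := f.factorsThrough_of_ker_le g hker
  refine ⟨Function.extend f g 0, ?_, fun a => (hg.extend_apply 0 a).symm⟩
  rintro _ ⟨a, rfl⟩ _ ⟨b, rfl⟩
  simp only [← map_add, hg.extend_apply]

theorem Matrix.mulVec_apply_eq_zero_of_row_eq_zero {m n R : Type*} [Fintype n]
    [NonUnitalNonAssocSemiring R] (M : Matrix m n R) (x : n → R) {i : m} (hi : M i = 0) :
    M.mulVec x i = 0 := by
  simp only [Matrix.mulVec, hi, zero_dotProduct]

theorem stmt_17 {K : Type*} [Field K] (n p : ℕ)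
    (S : Submodule K (Matrix (Fin n) (Fin p) K)) (i : Fin n)
    (F : S →+ (Fin n → K))
    (hrc : ∀ M : S, F M ∈ Set.range (M : Matrix (Fin n) (Fin p) K).mulVec) :
    ∃ Fi : (Fin p → K) → K,
      (∀ r₁ r₂ : Fin p → K,
        r₁ ∈ (fun M : Matrix (Fin n) (Fin p) K => M i) '' (S : Set (Matrix (Fin n) (Fin p) K)) →
        r₂ ∈ (fun M : Matrix (Fin n) (Fin p) K => M i) '' (S : Set (Matrix (Fin n) (Fin p) K)) →
        Fi (r₁ + r₂) = Fi r₁ + Fi r₂) ∧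
      ∀ M : S, F M i = Fi ((M : Matrix (Fin n) (Fin p) K) i) := by
  let row : S →+ (Fin p → K) := (Pi.evalAddMonoidHom _ i).comp S.subtype.toAddMonoidHom
  have hker : row.ker ≤ ((Pi.evalAddMonoidHom _ i).comp F).ker := by
    intro M hM
    obtain ⟨x, hx⟩ := hrc M
    simpa [← hx] using (M : Matrix (Fin n) (Fin p) K).mulVec_apply_eq_zero_of_row_eq_zero x hM
  obtain ⟨Fi, hadd, hFi⟩ := row.exists_additiveOn_range_comp_eq _ hker
  refine ⟨Fi, ?_, hFi⟩
  rintro _ _ ⟨M₁, hM₁, rfl⟩ ⟨M₂, hM₂, rfl⟩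
  exact hadd _ ⟨⟨M₁, hM₁⟩, rfl⟩ _ ⟨⟨M₂, hM₂⟩, rfl⟩
end

section
/- Let K be a field with char K = 2, and let f, g, u, v : K → K be additive maps satisfying g(t²x) + v(tx) = t·f(x) + t·u(tx) for all x, t ∈ K. Then there exist scalars λ, μ ∈ K and a root-linear additive map α : K → K (i.e., α(t²x) = t·α(x)) such that f(x) = λx + α(x), u(x) = μx, v(x) = λx, and g(x) = μx + α(x) for all x ∈ K. -/
/-!
Putting `t + 1` for `t` and using `(t + 1)² = t² + 1` in characteristic 2, the identity
becomes linear in the shift, which forces `u` to be `K`-linear; `t = 1` then expresses `g`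
through `f`, `v` and `u`, leaving `f (t² x) = t f x + v (t x) + v (t² x)`. Comparing this
at `t s` with its instances at `t` and `s`, and taking `x = s⁻¹`, gives a multiplicative
relation for `v` which, evaluated at the pairs `(a + 1, a)` and `(a, a + 1)`, shows that
`v` is linear. Finally `α = f + v 1 • id` is root-linear.
-/

section CommRing

variable {K : Type*} [CommRing K] [CharP K 2]

theorem map_mul_of_funeq {f g u v : K → K}
    (hg : ∀ x y : K, g (x + y) = g x + g y)
    (hu : ∀ x y : K, u (x + y) = u x + u y)
    (hv : ∀ x y : K, v (x + y) = v x + v y)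
    (hid : ∀ x t : K, g (t ^ 2 * x) + v (t * x) = t * f x + t * u (t * x)) (t x : K) :
    u (t * x) = t * u x := by
  have two_eq_zero : (2 : K) = 0 := CharTwo.two_eq_zero
  have h_shift := hid x (t + 1)
  rw [show (t + 1) ^ 2 * x = t ^ 2 * x + x by linear_combination t * x * two_eq_zero,
    add_mul, one_mul, hg, hv, hu] at h_shift
  have h_one := hid x 1
  simp only [one_pow, one_mul] at h_one
  linear_combination hid x t + h_one - h_shift - t * u x * two_eq_zero

theorem apply_eq_mul_of_funeq {f g u v : K → K}
    (hg : ∀ x y : K, g (x + y) = g x + g y)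
    (hu : ∀ x y : K, u (x + y) = u x + u y)
    (hv : ∀ x y : K, v (x + y) = v x + v y)
    (hid : ∀ x t : K, g (t ^ 2 * x) + v (t * x) = t * f x + t * u (t * x)) (x : K) :
    u x = u 1 * x := by
  simpa [mul_comm] using map_mul_of_funeq hg hu hv hid x 1

theorem eq_add_add_of_funeq {f g u v : K → K}
    (hg : ∀ x y : K, g (x + y) = g x + g y)
    (hu : ∀ x y : K, u (x + y) = u x + u y)
    (hv : ∀ x y : K, v (x + y) = v x + v y)
    (hid : ∀ x t : K, g (t ^ 2 * x) + v (t * x) = t * f x + t * u (t * x)) (x : K) :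
    g x = f x + v x + u 1 * x := by
  have h_one := hid x 1
  simp only [one_pow, one_mul] at h_one
  linear_combination h_one + apply_eq_mul_of_funeq hg hu hv hid x -
    v x * (CharTwo.two_eq_zero : (2 : K) = 0)

theorem apply_sq_mul_of_funeq {f g u v : K → K}
    (hg : ∀ x y : K, g (x + y) = g x + g y)
    (hu : ∀ x y : K, u (x + y) = u x + u y)
    (hv : ∀ x y : K, v (x + y) = v x + v y)
    (hid : ∀ x t : K, g (t ^ 2 * x) + v (t * x) = t * f x + t * u (t * x)) (t x : K) :
    f (t ^ 2 * x) = t * f x + v (t * x) + v (t ^ 2 * x) := by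
  linear_combination hid x t - eq_add_add_of_funeq hg hu hv hid (t ^ 2 * x) -
    t * apply_eq_mul_of_funeq hg hu hv hid (t * x) +
    (t * u (t * x) - v (t * x) - v (t ^ 2 * x) - u 1 * (t ^ 2 * x)) *
      (CharTwo.two_eq_zero : (2 : K) = 0)

end CommRing

section Field

variable {K : Type*} [Field K]

theorem map_eq_add_add_of_apply_sq_mul {f v : K → K}
    (hA : ∀ t x : K, f (t ^ 2 * x) = t * f x + v (t * x) + v (t ^ 2 * x))
    (t : K) {s : K} (hs : s ≠ 0) :
    v t = t * v 1 + t * v s + v (t * s) := by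
  have hss : s * s⁻¹ = 1 := mul_inv_cancel₀ hs
  have hs2 : s ^ 2 * s⁻¹ = s := by rw [sq, mul_assoc, hss, mul_one]
  have h_prod := hA (t * s) s⁻¹
  rw [mul_pow, mul_assoc, hs2, mul_inv_cancel_right₀ hs] at h_prod
  have h_inv := hA s s⁻¹
  rw [hss, hs2] at h_inv
  linear_combination hA t s - h_prod + t * h_inv

theorem eq_mul_of_map_eq_add_add {v : K → K} (hv : ∀ x y : K, v (x + y) = v x + v y)
    (hrel : ∀ t s : K, s ≠ 0 → v t = t * v 1 + t * v s + v (t * s)) (a : K) :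
    v a = v 1 * a := by
  let V := AddMonoidHom.mk' v hv
  rcases eq_or_ne a 0 with rfl | ha
  · rw [mul_zero]
    exact V.map_zero
  rcases eq_or_ne (a + 1) 0 with ha' | ha'
  · rw [eq_neg_of_add_eq_zero_left ha', mul_neg_one]
    exact V.map_neg 1
  -- The terms `v (a (a + 1))` of the two instances cancel.
  linear_combination hrel a (a + 1) ha' - hrel (a + 1) a ha + (1 + a) * hv a 1 +
    congrArg v (mul_comm a (a + 1))

end Field

theorem stmt_18 {K : Type*} [Field K] [CharP K 2]
    (f g u v : K → K)
    (hf : ∀ x y : K, f (x + y) = f x + f y)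
    (hg : ∀ x y : K, g (x + y) = g x + g y)
    (hu : ∀ x y : K, u (x + y) = u x + u y)
    (hv : ∀ x y : K, v (x + y) = v x + v y)
    (hid : ∀ x t : K, g (t ^ 2 * x) + v (t * x) = t * f x + t * u (t * x)) :
    ∃ (l m : K) (α : K → K),
      (∀ x y : K, α (x + y) = α x + α y) ∧
      (∀ t x : K, α (t ^ 2 * x) = t * α x) ∧
      ∀ x : K, f x = l * x + α x ∧ u x = m * x ∧ v x = l * x ∧ g x = m * x + α x := by
  have two_eq_zero : (2 : K) = 0 := CharTwo.two_eq_zero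
  have hA := apply_sq_mul_of_funeq hg hu hv hid
  have hv_lin := eq_mul_of_map_eq_add_add hv fun t _ hs =>
    map_eq_add_add_of_apply_sq_mul hA t hs
  refine ⟨v 1, u 1, fun x => f x + v 1 * x, fun x y => ?_, fun t x => ?_,
    fun x => ⟨?_, apply_eq_mul_of_funeq hg hu hv hid x, hv_lin x, ?_⟩⟩
  · simp only [hf]; ring
  · linear_combination hA t x + hv_lin (t * x) + hv_lin (t ^ 2 * x) +
      v 1 * t ^ 2 * x * two_eq_zero
  · linear_combination -(v 1 * x) * two_eq_zero
  · linear_combination eq_add_add_of_funeq hg hu hv hid x + hv_lin x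
end

section
/- Let K be a field of characteristic not 2, and let f, g, u, v : K → K be additive maps satisfying g(t²x) + v(tx) = t·f(x) + t·u(tx) for all x, t ∈ K. Then there exist scalars λ, μ ∈ K such that f(x) = λx, u(x) = μx, v(x) = λx, and g(x) = μx for all x ∈ K. -/
/-! Replacing `t` by `-t` and using that the additive maps `u` and `v` are odd splits the identity
into its odd and even parts in `t`; as `2` is invertible this gives `v (t x) = t f(x)` and
`g (t² x) = t u(t x)`. Then `t = 1` yields `v = f` and `g = u`, `x = 1` makes `f` linear, and
`x = t⁻¹` makes `g = u` linear. -/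

section FunctionalEquation

variable {K : Type*} [Field K] {f g u v : K → K}

theorem g_sq_mul_sub_v_mul (hu : ∀ x y : K, u (x + y) = u x + u y)
    (hv : ∀ x y : K, v (x + y) = v x + v y)
    (hid : ∀ x t : K, g (t ^ 2 * x) + v (t * x) = t * f x + t * u (t * x)) (x t : K) :
    g (t ^ 2 * x) - v (t * x) = -(t * f x) + t * u (t * x) := by
  have hu_neg (y : K) : u (-y) = -u y := map_neg (AddMonoidHom.mk' u hu) y
  have hv_neg (y : K) : v (-y) = -v y := map_neg (AddMonoidHom.mk' v hv) y
  have h := hid x (-t)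
  rw [neg_sq, neg_mul, hu_neg, hv_neg] at h
  linear_combination h

theorem v_mul_eq_mul_f (hchar : ringChar K ≠ 2) (hu : ∀ x y : K, u (x + y) = u x + u y)
    (hv : ∀ x y : K, v (x + y) = v x + v y)
    (hid : ∀ x t : K, g (t ^ 2 * x) + v (t * x) = t * f x + t * u (t * x)) (x t : K) :
    v (t * x) = t * f x :=
  mul_left_cancel₀ (Ring.two_ne_zero hchar)
    (by linear_combination hid x t - g_sq_mul_sub_v_mul hu hv hid x t)

theorem g_sq_mul_eq_mul_u (hchar : ringChar K ≠ 2) (hu : ∀ x y : K, u (x + y) = u x + u y)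
    (hv : ∀ x y : K, v (x + y) = v x + v y)
    (hid : ∀ x t : K, g (t ^ 2 * x) + v (t * x) = t * f x + t * u (t * x)) (x t : K) :
    g (t ^ 2 * x) = t * u (t * x) :=
  mul_left_cancel₀ (Ring.two_ne_zero hchar)
    (by linear_combination hid x t + g_sq_mul_sub_v_mul hu hv hid x t)

end FunctionalEquation

theorem stmt_19_general {K : Type*} [Field K] (hchar : ringChar K ≠ 2)
    (f g u v : K → K)
    (hu : ∀ x y : K, u (x + y) = u x + u y)
    (hv : ∀ x y : K, v (x + y) = v x + v y)
    (hid : ∀ x t : K, g (t ^ 2 * x) + v (t * x) = t * f x + t * u (t * x)) :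
    ∃ l m : K, ∀ x : K, f x = l * x ∧ u x = m * x ∧ v x = l * x ∧ g x = m * x := by
  have hvf (x : K) : v x = f x := by
    simpa using v_mul_eq_mul_f hchar hu hv hid x 1
  have hf (t : K) : f t = f 1 * t := by
    rw [← hvf, ← mul_one t, v_mul_eq_mul_f hchar hu hv hid, mul_one, mul_comm]
  have hgu (x : K) : g x = u x := by
    linear_combination (by simpa using hid x 1 : g x + v x = f x + u x) - hvf x
  have hu_lin (t : K) : u t = u 1 * t := by
    rcases eq_or_ne t 0 with rfl | ht
    · rw [mul_zero]
      exact map_zero (AddMonoidHom.mk' u hu)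
    · have h := g_sq_mul_eq_mul_u hchar hu hv hid t⁻¹ t
      rwa [mul_inv_cancel₀ ht, sq, mul_assoc, mul_inv_cancel₀ ht, mul_one, hgu, mul_comm] at h
  exact ⟨f 1, u 1, fun x => ⟨hf x, hu_lin x, (hvf x).trans (hf x), (hgu x).trans (hu_lin x)⟩⟩

theorem stmt_19 {K : Type*} [Field K] (hchar : ringChar K ≠ 2)
    (f g u v : K → K)
    (hf : ∀ x y : K, f (x + y) = f x + f y)
    (hg : ∀ x y : K, g (x + y) = g x + g y)
    (hu : ∀ x y : K, u (x + y) = u x + u y)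
    (hv : ∀ x y : K, v (x + y) = v x + v y)
    (hid : ∀ x t : K, g (t ^ 2 * x) + v (t * x) = t * f x + t * u (t * x)) :
    ∃ l m : K, ∀ x : K, f x = l * x ∧ u x = m * x ∧ v x = l * x ∧ g x = m * x :=
  stmt_19_general hchar f g u v hu hv hid
end
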